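/- Let $X$ and $Y$ be independent random variables with common distribution function $F$, let $0<p<1$, and let $\psi$ be a nonnegative measurable function. Then $\left\{E\left(\left(E\left(\frac{\psi(Y)}{F(Y)}\mathbf{1}_{[Y\ge X]}\mid X\right)\right)^p\right)\right\}^{1/p} \ge p\,\left\{E(\psi^p(Y))\right\}^{1/p}$. -/

import Mathlib

/-!
Write `μ` for the law of `X` and `Y`, `F y = μ (-∞, y]`, and `A x = ∫_{[x, ∞)} ψ / F dμ`, the
tail of the measure `ν = (ψ / F) • μ`. For any finite measure `ν` on the line, the tail
`T y = ν [y, ∞)` satisfies `ν {T ≤ s} ≤ s`, so `T` dominates the uniform law on `[0, ν univ]` and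
`p ∫ T ^ (p - 1) dν ≤ (ν univ) ^ p`. Applied to `ν` restricted to `[x, ∞)` and integrated in `x`
against `μ` (Tonelli turns `∫∫_{y ≥ x}` into a weight `F y`), this gives
`p ∫ ψ A ^ (p - 1) dμ ≤ ∫ A ^ p dμ`. Hölder's inequality with exponents `1 / p` and `1 / (1 - p)`
applied to `ψ ^ p = (ψ A ^ (p - 1)) ^ p (A ^ p) ^ (1 - p)` then yields `p ^ p ∫ ψ ^ p ≤ ∫ A ^ p`.
-/

open MeasureTheory Set ENNReal ProbabilityTheory

theorem lintegral_Ioi_rpow_of_lt_neg_one {r c : ℝ} (hr : r < -1) (hc : 0 < c) :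
    ∫⁻ t in Ioi c, ENNReal.ofReal (t ^ r) = ENNReal.ofReal (-c ^ (r + 1) / (r + 1)) := by
  rw [← integral_Ioi_rpow_of_lt hr hc, ofReal_integral_eq_lintegral_ofReal
    (integrableOn_Ioi_rpow_of_lt hr hc)]
  filter_upwards [ae_restrict_mem measurableSet_Ioi] with t ht
  exact Real.rpow_nonneg (hc.trans ht).le _

/-- The right-hand side is `p ∫₀^∞ min (m, t ^ (p - 1)⁻¹) dt`, computed by splitting at
`t = m ^ (p - 1)`. -/
theorem ofReal_mul_setLIntegral_Ioi_le_of_le_min_rpow {g : ℝ → ℝ≥0∞} {m p : ℝ} (hm : 0 < m)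
    (hp0 : 0 < p) (hp1 : p < 1) (hg_le : ∀ t, g t ≤ ENNReal.ofReal m)
    (hg_le_rpow : ∀ t, 0 < t → g t ≤ ENNReal.ofReal (t ^ (p - 1)⁻¹)) :
    ENNReal.ofReal p * ∫⁻ t in Ioi 0, g t ≤ ENNReal.ofReal (m ^ p) := by
  set s₀ := m ^ (p - 1)
  have hs₀ : 0 < s₀ := Real.rpow_pos_of_pos hm _
  have hsmall : ∫⁻ t in Ioc 0 s₀, g t ≤ ENNReal.ofReal (m ^ p) := by
    calc ∫⁻ t in Ioc 0 s₀, g t ≤ ∫⁻ _ in Ioc 0 s₀, ENNReal.ofReal m := lintegral_mono hg_le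
      _ = ENNReal.ofReal (m ^ p) := by
          rw [setLIntegral_const, Real.volume_Ioc, sub_zero, ← ofReal_mul hm.le]
          simp only [s₀, Real.rpow_sub_one hm.ne', mul_div_cancel₀ _ hm.ne']
  have hlarge : ∫⁻ t in Ioi s₀, g t ≤ ENNReal.ofReal (m ^ p * ((1 - p) / p)) := by
    have hp1' : p - 1 ≠ 0 := by linarith
    have hr : (p - 1)⁻¹ < -1 := by
      rw [inv_eq_one_div, div_lt_iff_of_neg (by linarith)]
      linarith
    calc ∫⁻ t in Ioi s₀, g t ≤ ∫⁻ t in Ioi s₀, ENNReal.ofReal (t ^ (p - 1)⁻¹) :=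
          setLIntegral_mono (by fun_prop) fun t ht => hg_le_rpow t (hs₀.trans ht)
      _ = ENNReal.ofReal (m ^ p * ((1 - p) / p)) := by
          have hexp : (p - 1) * ((p - 1)⁻¹ + 1) = p := by field_simp; ring
          rw [lintegral_Ioi_rpow_of_lt_neg_one hr hs₀, ← Real.rpow_mul hm.le, hexp,
            show (p - 1)⁻¹ + 1 = p / (p - 1) by field_simp; ring]
          congr 1
          field_simp
          ring
  rw [← Ioc_union_Ioi_eq_Ioi hs₀.le, lintegral_union measurableSet_Ioi (Ioc_disjoint_Ioi le_rfl)]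
  calc ENNReal.ofReal p * ((∫⁻ t in Ioc 0 s₀, g t) + ∫⁻ t in Ioi s₀, g t)
      ≤ ENNReal.ofReal p * (ENNReal.ofReal (m ^ p) + ENNReal.ofReal (m ^ p * ((1 - p) / p))) := by
        gcongr
    _ = ENNReal.ofReal (m ^ p) := by
        have hq : 0 ≤ 1 - p := by linarith
        rw [← ofReal_add (by positivity) (by positivity), ← ofReal_mul hp0.le]
        congr 1
        field_simp
        ring

theorem measure_lt_toReal_rpow_le {α : Type*} [MeasurableSpace α] (ν : Measure α)
    {T : α → ℝ≥0∞} (hν : ∀ s, ν {a | T a ≤ s} ≤ s) {p : ℝ} (hp1 : p < 1) {t : ℝ} (ht : 0 < t) :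
    ν {a | t < (T a ^ (p - 1)).toReal} ≤ ENNReal.ofReal (t ^ (p - 1)⁻¹) := by
  refine (measure_mono fun a (ha : t < (T a ^ (p - 1)).toReal) => ?_).trans (hν _)
  rw [← toReal_rpow] at ha
  obtain hτ | hτ := (toReal_nonneg (a := T a)).eq_or_lt
  · rw [← hτ, Real.zero_rpow (by linarith)] at ha
    exact absurd ht ha.le.not_gt
  show T a ≤ _
  rw [← ofReal_toReal (toReal_pos_iff.1 hτ).2.ne]
  exact ofReal_le_ofReal ((Real.lt_rpow_inv_iff_of_neg hτ ht (by linarith)).2 ha).le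

/-- A function with `ν {T ≤ s} ≤ s` is stochastically larger than the uniform law on
`[0, ν univ]`, so `∫ T ^ (p - 1) dν` is at most `∫₀^{ν univ} s ^ (p - 1) ds`. -/
theorem ofReal_mul_lintegral_rpow_sub_one_le {α : Type*} [MeasurableSpace α] (ν : Measure α)
    [IsFiniteMeasure ν] {T : α → ℝ≥0∞} (hT : Measurable T) (hν : ∀ s, ν {a | T a ≤ s} ≤ s)
    {p : ℝ} (hp0 : 0 < p) (hp1 : p < 1) :
    ENNReal.ofReal p * ∫⁻ a, T a ^ (p - 1) ∂ν ≤ ν univ ^ p := by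
  rcases eq_zero_or_pos (ν univ) with hν0 | hν0
  · simp [Measure.measure_univ_eq_zero.1 hν0]
  have hm : 0 < (ν univ).toReal := toReal_pos hν0.ne' (measure_ne_top ν univ)
  have hT0 : ∀ᵐ a ∂ν, T a ≠ 0 := by
    simpa only [ae_iff, ne_eq, not_not, nonpos_iff_eq_zero] using le_zero_iff.1 (hν 0)
  have hT_toReal : ∫⁻ a, T a ^ (p - 1) ∂ν = ∫⁻ a, ENNReal.ofReal (T a ^ (p - 1)).toReal ∂ν := by
    refine lintegral_congr_ae ?_
    filter_upwards [hT0] with a ha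
    refine (ofReal_toReal ?_).symm
    simp [rpow_eq_top_iff, ha, hp1.le]
  rw [hT_toReal, lintegral_eq_lintegral_meas_lt ν (.of_forall fun _ => toReal_nonneg)
    (hT.pow_const _).ennreal_toReal.aemeasurable, ← ofReal_toReal (measure_ne_top ν univ),
    ofReal_rpow_of_pos hm]
  refine ofReal_mul_setLIntegral_Ioi_le_of_le_min_rpow hm hp0 hp1 (fun t => ?_)
    fun t ht => measure_lt_toReal_rpow_le ν hν hp1 ht
  rw [ofReal_toReal (measure_ne_top ν univ)]
  exact measure_mono (subset_univ _)

section OrderTopology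

variable {α : Type*} [ConditionallyCompleteLinearOrder α] [TopologicalSpace α] [OrderTopology α]
  [MeasurableSpace α] [BorelSpace α]

theorem measure_le_of_isUpperSet (ν : Measure α) [IsFiniteMeasure ν] [ν.InnerRegularCompactLTTop]
    {U : Set α} (hU : IsUpperSet U) {s : ℝ≥0∞} (h : ∀ y ∈ U, ν (Ici y) ≤ s) : ν U ≤ s := by
  rw [hU.ordConnected.measurableSet.measure_eq_iSup_isCompact_of_ne_top (measure_ne_top ν U)]
  refine iSup₂_le fun K hKU => iSup_le fun hK => ?_
  rcases K.eq_empty_or_nonempty with rfl | hK₀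
  · simp
  exact (measure_mono fun y hy => mem_Ici.2 (csInf_le hK.bddBelow hy)).trans
    (h _ (hKU (hK.sInf_mem hK₀)))

theorem measure_le_of_isLowerSet (ν : Measure α) [IsFiniteMeasure ν] [ν.InnerRegularCompactLTTop]
    {L : Set α} (hL : IsLowerSet L) {s : ℝ≥0∞} (h : ∀ y ∈ L, ν (Iic y) ≤ s) : ν L ≤ s := by
  rw [hL.ordConnected.measurableSet.measure_eq_iSup_isCompact_of_ne_top (measure_ne_top ν L)]
  refine iSup₂_le fun K hKL => iSup_le fun hK => ?_
  rcases K.eq_empty_or_nonempty with rfl | hK₀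
  · simp
  exact (measure_mono fun y hy => mem_Iic.2 (le_csSup hK.bddAbove hy)).trans
    (h _ (hKL (hK.sSup_mem hK₀)))

theorem ae_measure_Iic_ne_zero (ν : Measure α) [IsFiniteMeasure ν] [ν.InnerRegularCompactLTTop] :
    ∀ᵐ y ∂ν, ν (Iic y) ≠ 0 := by
  simp only [ae_iff, ne_eq, not_not]
  refine le_zero_iff.1 (measure_le_of_isLowerSet ν (fun a b hba ha => ?_) fun y hy => hy.le)
  exact le_zero_iff.1 (ha ▸ measure_mono (Iic_subset_Iic.2 hba))

theorem measurable_measure_Ici (ν : Measure α) : Measurable fun y => ν (Ici y) :=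
  Antitone.measurable fun _ _ hab => measure_mono (Ici_subset_Ici.2 hab)

theorem measurable_measure_Iic (ν : Measure α) : Measurable fun y => ν (Iic y) :=
  Monotone.measurable fun _ _ hab => measure_mono (Iic_subset_Iic.2 hab)

theorem ofReal_mul_setLIntegral_Ici_measure_Ici_rpow_le (ν : Measure α)
    [ν.InnerRegularCompactLTTop] (x : α) {p : ℝ} (hp0 : 0 < p) (hp1 : p < 1) :
    ENNReal.ofReal p * ∫⁻ y in Ici x, ν (Ici y) ^ (p - 1) ∂ν ≤ ν (Ici x) ^ p := by
  rcases eq_or_ne (ν (Ici x)) ∞ with h | h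
  · simp [h, top_rpow_of_pos hp0]
  have : IsFiniteMeasure (ν.restrict (Ici x)) := isFiniteMeasure_restrict.2 h
  have hν : ∀ s, ν.restrict (Ici x) {y | ν (Ici y) ≤ s} ≤ s := fun s =>
    measure_le_of_isUpperSet _ (fun _ _ hab ha => (measure_mono (Ici_subset_Ici.2 hab)).trans ha)
      fun _ hy => (Measure.restrict_apply_le _ _).trans hy
  simpa only [Measure.restrict_apply_univ] using
    ofReal_mul_lintegral_rpow_sub_one_le _ (measurable_measure_Ici ν) hν hp0 hp1

variable [SecondCountableTopology α]

theorem lintegral_mul_measure_Iic (μ ν : Measure α) [SFinite μ] [SFinite ν] {h : α → ℝ≥0∞}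
    (hh : Measurable h) : ∫⁻ y, h y * μ (Iic y) ∂ν = ∫⁻ x, ∫⁻ y in Ici x, h y ∂ν ∂μ := by
  have hS : MeasurableSet {q : α × α | q.1 ≤ q.2} := measurableSet_le measurable_fst measurable_snd
  calc ∫⁻ y, h y * μ (Iic y) ∂ν = ∫⁻ y, μ (Iic y) ∂(ν.withDensity h) :=
        (lintegral_withDensity_eq_lintegral_mul₀ hh.aemeasurable
          (measurable_measure_Iic μ).aemeasurable).symm
    _ = (μ.prod (ν.withDensity h)) {q | q.1 ≤ q.2} := (Measure.prod_apply_symm hS).symm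
    _ = ∫⁻ x, ∫⁻ y in Ici x, h y ∂ν ∂μ := by
        rw [Measure.prod_apply hS]
        exact lintegral_congr fun x => withDensity_apply _ measurableSet_Ici

theorem ofReal_mul_lintegral_measure_Ici_rpow_mul_measure_Iic_le (μ ν : Measure α) [SFinite μ]
    [SFinite ν] [ν.InnerRegularCompactLTTop] {p : ℝ} (hp0 : 0 < p) (hp1 : p < 1) :
    ENNReal.ofReal p * ∫⁻ y, ν (Ici y) ^ (p - 1) * μ (Iic y) ∂ν ≤ ∫⁻ x, ν (Ici x) ^ p ∂μ := by
  rw [lintegral_mul_measure_Iic μ ν ((measurable_measure_Ici ν).pow_const _),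
    ← lintegral_const_mul' _ _ ofReal_ne_top]
  exact lintegral_mono fun x => ofReal_mul_setLIntegral_Ici_measure_Ici_rpow_le ν x hp0 hp1

end OrderTopology

theorem ENNReal.rpow_eq_mul_rpow_sub_one_rpow_mul_rpow {a b : ℝ≥0∞} {p : ℝ} (hp0 : 0 < p)
    (hp1 : p < 1) (hb : b ≠ ∞) (hab : a * b ^ (p - 1) ≠ ∞) :
    a ^ p = (a * b ^ (p - 1)) ^ p * (b ^ p) ^ (1 - p) := by
  rcases eq_or_ne b 0 with rfl | hb0
  · obtain rfl : a = 0 := by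
      contrapose! hab
      rw [zero_rpow_of_neg (by linarith), mul_top hab]
    simp [zero_rpow_of_pos hp0]
  rw [mul_rpow_of_nonneg _ _ hp0.le, ← rpow_mul, ← rpow_mul, mul_assoc, ← rpow_add _ _ hb0 hb]
  ring_nf
  rw [rpow_zero, mul_one]

theorem ofReal_rpow_mul_lintegral_rpow_le {α : Type*} [MeasurableSpace α] (μ : Measure α)
    {f g : α → ℝ≥0∞} (hf : AEMeasurable f μ) (hg : AEMeasurable g μ) {p : ℝ} (hp0 : 0 < p)
    (hp1 : p < 1) (h : ENNReal.ofReal p * ∫⁻ a, f a * g a ^ (p - 1) ∂μ ≤ ∫⁻ a, g a ^ p ∂μ) :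
    ENNReal.ofReal p ^ p * ∫⁻ a, f a ^ p ∂μ ≤ ∫⁻ a, g a ^ p ∂μ := by
  set I := ∫⁻ a, g a ^ p ∂μ
  set K := ∫⁻ a, f a * g a ^ (p - 1) ∂μ
  rcases eq_or_ne I ∞ with hI | hI
  · exact hI ▸ le_top
  have hK : K ≠ ∞ := by
    rintro hK
    rw [hK, mul_top (by simpa using hp0)] at h
    exact hI (top_le_iff.1 h)
  have hg_fin : ∀ᵐ a ∂μ, g a ≠ ∞ := by
    filter_upwards [ae_lt_top' (hg.pow_const p) hI] with a ha hga
    rw [hga, top_rpow_of_pos hp0] at ha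
    exact lt_irrefl _ ha
  have hfg_fin : ∀ᵐ a ∂μ, f a * g a ^ (p - 1) ≠ ∞ :=
    (ae_lt_top' (hf.mul (hg.pow_const _)) hK).mono fun _ => ne_of_lt
  have holder : ∫⁻ a, f a ^ p ∂μ ≤ K ^ p * I ^ (1 - p) := by
    calc ∫⁻ a, f a ^ p ∂μ = ∫⁻ a, (f a * g a ^ (p - 1)) ^ p * (g a ^ p) ^ (1 - p) ∂μ := by
          refine lintegral_congr_ae ?_
          filter_upwards [hg_fin, hfg_fin] with a h₁ h₂
          exact rpow_eq_mul_rpow_sub_one_rpow_mul_rpow hp0 hp1 h₁ h₂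
      _ ≤ K ^ p * I ^ (1 - p) := by
          have := lintegral_mul_le_Lp_mul_Lq μ (.inv_one_sub_inv hp0 hp1)
            ((hf.mul (hg.pow_const (p - 1))).pow_const p) ((hg.pow_const p).pow_const (1 - p))
          simpa only [Pi.mul_apply, ← rpow_mul, mul_inv_cancel₀ hp0.ne',
            mul_inv_cancel_right₀ (sub_ne_zero.2 hp1.ne'), rpow_one, one_div, inv_inv] using this
  calc ENNReal.ofReal p ^ p * ∫⁻ a, f a ^ p ∂μ ≤ (ENNReal.ofReal p * K) ^ p * I ^ (1 - p) := by
        rw [mul_rpow_of_nonneg _ _ hp0.le, mul_assoc]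
        gcongr
    _ ≤ I ^ p * I ^ (1 - p) := by gcongr
    _ = I := by rw [← rpow_add_of_nonneg _ _ hp0.le (by linarith), add_sub_cancel, rpow_one]

theorem reversed_copson (μ : Measure ℝ) [IsFiniteMeasure μ] {f : ℝ → ℝ≥0∞} (hf : Measurable f)
    {p : ℝ} (hp0 : 0 < p) (hp1 : p < 1) :
    ENNReal.ofReal p ^ p * ∫⁻ y, f y ^ p ∂μ
      ≤ ∫⁻ x, (∫⁻ y in Ici x, f y / μ (Iic y) ∂μ) ^ p ∂μ := by
  have hdens : Measurable fun y => f y / μ (Iic y) := hf.div (measurable_measure_Iic μ)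
  set ν := μ.withDensity fun y => f y / μ (Iic y)
  have hνIci : ∀ x, ν (Ici x) = ∫⁻ y in Ici x, f y / μ (Iic y) ∂μ := fun x =>
    withDensity_apply _ measurableSet_Ici
  simp_rw [← hνIci]
  refine ofReal_rpow_mul_lintegral_rpow_le μ hf.aemeasurable
    (measurable_measure_Ici ν).aemeasurable hp0 hp1 ?_
  calc ENNReal.ofReal p * ∫⁻ y, f y * ν (Ici y) ^ (p - 1) ∂μ
      = ENNReal.ofReal p * ∫⁻ y, ν (Ici y) ^ (p - 1) * μ (Iic y) ∂ν := by
        congr 1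
        refine (lintegral_congr_ae ?_).trans (lintegral_withDensity_eq_lintegral_mul _ hdens
          (((measurable_measure_Ici ν).pow_const _).mul (measurable_measure_Iic μ))).symm
        filter_upwards [ae_measure_Iic_ne_zero μ] with y hy
        change _ = f y / μ (Iic y) * (ν (Ici y) ^ (p - 1) * μ (Iic y))
        rw [mul_comm (ν _ ^ _), ← mul_assoc, ENNReal.div_mul_cancel hy (measure_ne_top μ _)]
    _ ≤ ∫⁻ x, ν (Ici x) ^ p ∂μ :=
        ofReal_mul_lintegral_measure_Ici_rpow_mul_measure_Iic_le μ ν hp0 hp1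

/-- The conditional expectation `E(ψ(Y) / F(Y) 1_{Y ≥ X} | X)` is written out, by independence,
as `∫_{[X, ∞)} ψ / F dμ` with `μ` the common law and `F y = μ (-∞, y]`. -/
theorem probability_copson_reversed_general {Ω : Type*} [MeasurableSpace Ω] (P : Measure Ω)
    [IsProbabilityMeasure P] (X Y : Ω → ℝ) (hX : Measurable X) (hY : Measurable Y)
    (hid : Measure.map X P = Measure.map Y P)
    (ψ : ℝ → ℝ) (hψ : Measurable ψ)
    (p : ℝ) (hp0 : 0 < p) (hp1 : p < 1) :
    (∫⁻ ω, (∫⁻ y in Ici (X ω),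
          ENNReal.ofReal (ψ y) / Measure.map Y P (Iic y) ∂(Measure.map Y P)) ^ p ∂P)
        ^ (1 / p)
      ≥ ENNReal.ofReal p * (∫⁻ ω, ENNReal.ofReal (ψ (Y ω)) ^ p ∂P) ^ (1 / p) := by
  set μ := Measure.map Y P
  have : IsProbabilityMeasure μ := Measure.isProbabilityMeasure_map hY.aemeasurable
  set A : ℝ → ℝ≥0∞ := fun x => ∫⁻ y in Ici x, ENNReal.ofReal (ψ y) / μ (Iic y) ∂μ
  have hA : Measurable A :=
    Antitone.measurable fun _ _ hab => lintegral_mono_set (Ici_subset_Ici.2 hab)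
  have hLHS : ∫⁻ ω, A (X ω) ^ p ∂P = ∫⁻ x, A x ^ p ∂μ := by
    rw [← hid, lintegral_map (hA.pow_const p) hX]
  have hRHS : ∫⁻ ω, ENNReal.ofReal (ψ (Y ω)) ^ p ∂P = ∫⁻ y, ENNReal.ofReal (ψ y) ^ p ∂μ :=
    (lintegral_map ((measurable_ofReal.comp hψ).pow_const p) hY).symm
  rw [ge_iff_le, hLHS, hRHS, ← rpow_rpow_inv hp0.ne' (ENNReal.ofReal p), ← one_div,
    ← mul_rpow_of_nonneg _ _ (by positivity)]
  exact rpow_le_rpow (reversed_copson μ (measurable_ofReal.comp hψ) hp0 hp1) (by positivity)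

/-- Probability theoretic reversed Copson inequality for `0 < p < 1` (Theorem 4):
`{E((E(ψ(Y)/F(Y) 1_{Y≥X} | X))^p)}^{1/p} ≥ p {E(ψ(Y)^p)}^{1/p}`.
The conditional expectation is written explicitly, via independence, as
`∫_{[X,∞)} ψ(y)/F(y) dμ(y)` with `μ` the common law and `F(y) = μ(-∞,y]`. -/
theorem probability_copson_reversed {Ω : Type*} [MeasurableSpace Ω] (P : Measure Ω)
    [IsProbabilityMeasure P] (X Y : Ω → ℝ) (hX : Measurable X) (hY : Measurable Y)
    (hindep : IndepFun X Y P) (hid : Measure.map X P = Measure.map Y P)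
    (ψ : ℝ → ℝ) (hψ : Measurable ψ) (hpos : ∀ y, 0 ≤ ψ y)
    (p : ℝ) (hp0 : 0 < p) (hp1 : p < 1) :
    (∫⁻ ω, (∫⁻ y in Ici (X ω),
          ENNReal.ofReal (ψ y) / Measure.map Y P (Iic y) ∂(Measure.map Y P)) ^ p ∂P)
        ^ (1 / p)
      ≥ ENNReal.ofReal p * (∫⁻ ω, ENNReal.ofReal (ψ (Y ω)) ^ p ∂P) ^ (1 / p) :=
  probability_copson_reversed_general P X Y hX hY hid ψ hψ p hp0 hp1
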